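/- The graph C_4 (the 4-cycle) has treedepth 3 and matched treedepth 4. -/

import Mathlib

open SimpleGraph

/-- An elimination tree (forest) of a graph `G`, encoded via its strict
ancestor relation `anc`: ancestors of each vertex form a chain, every edge of
`G` joins comparable vertices, and the vertex set of every subtree induces a
connected subgraph (so the subtrees of any node are exactly the connected
components left after deleting the node and its ancestors, as in the
recursive definition). -/
structure ElimTree {V : Type} (G : SimpleGraph V) where
  anc : V → V → Prop
  trans : ∀ a b c, anc a b → anc b c → anc a c
  irrefl : ∀ a, ¬ anc a a
  chainAnc : ∀ a b c, anc a c → anc b c → a = b ∨ anc a b ∨ anc b a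
  edgeComp : ∀ u v, G.Adj u v → anc u v ∨ anc v u
  subtreeConn : ∀ v, (G.induce {w | w = v ∨ anc v w}).Connected

/-- Depth: maximum number of vertices on a root-to-leaf path. -/
noncomputable def ElimTree.depth {V : Type} [Fintype V] {G : SimpleGraph V}
    (T : ElimTree G) : ℕ :=
  Finset.univ.sup fun v => {u | T.anc u v}.ncard + 1

/-- Treedepth: minimum depth of an elimination tree. -/
noncomputable def treedepth {V : Type} [Fintype V] (G : SimpleGraph V) : ℕ :=
  sInf {d | ∃ T : ElimTree G, T.depth = d}

/-- The matched condition on a root-to-leaf path `(v₁, …, v_k)` (as a list):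
if `k` is even, the pairs `v₁v₂, v₃v₄, …, v_{k-1}v_k` are edges (a matching);
if `k` is odd, there is a position `p` (0-based, odd) such that consecutive
pairs form edges, with the vertex at position `p` used twice. -/
def MatchedList {V : Type} (G : SimpleGraph V) (l : List V) : Prop :=
  (Even l.length ∧ ∀ (j : ℕ) (h : 2 * j + 1 < l.length),
      G.Adj (l.get ⟨2 * j, by omega⟩) (l.get ⟨2 * j + 1, h⟩)) ∨
  (Odd l.length ∧ ∃ p : ℕ, Odd p ∧ ∃ _hp : p + 1 < l.length,
      (∀ (j : ℕ) (_h : 2 * j + 1 ≤ p),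
        G.Adj (l.get ⟨2 * j, by omega⟩) (l.get ⟨2 * j + 1, by omega⟩)) ∧
      (∀ (b : ℕ) (h : p + 2 * b + 1 < l.length),
        G.Adj (l.get ⟨p + 2 * b, by omega⟩) (l.get ⟨p + 2 * b + 1, h⟩)))

/-- A matched elimination tree: every root-to-leaf path (enumerated in order
from the root) satisfies the matched condition. -/
def ElimTree.IsMatched {V : Type} {G : SimpleGraph V} (T : ElimTree G) : Prop :=
  ∀ v : V, (∀ w, ¬ T.anc v w) →
    ∀ l : List V, l.Pairwise T.anc → (∀ u, u ∈ l ↔ (T.anc u v ∨ u = v)) →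
      MatchedList G l

/-- Matched treedepth: minimum depth of a matched elimination tree. -/
noncomputable def mtd {V : Type} [Fintype V] (G : SimpleGraph V) : ℕ :=
  sInf {d | ∃ T : ElimTree G, T.IsMatched ∧ T.depth = d}

/-! ### Auxiliary material -/


private def a1 : Fin 4 → Fin 4 → Prop :=
  fun a b => (a = 0 ∧ b ≠ 0) ∨ (a = 2 ∧ (b = 1 ∨ b = 3))

private instance : DecidableRel a1 :=
  fun a b => inferInstanceAs (Decidable ((a = 0 ∧ b ≠ 0) ∨ (a = 2 ∧ (b = 1 ∨ b = 3))))

private def lt4 : Fin 4 → Fin 4 → Prop := fun a b => a < b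

private instance : DecidableRel lt4 := fun a b => inferInstanceAs (Decidable (a < b))

private instance : IsAntisymm (Fin 4) lt4 :=
  ⟨fun a b h1 h2 => absurd (lt_trans (show a < b from h1) h2) (lt_irrefl _)⟩

private instance instIndAdj {s : Set (Fin 4)} [DecidablePred (· ∈ s)] :
    DecidableRel ((cycleGraph 4).induce s).Adj :=
  fun a b => inferInstanceAs (Decidable ((cycleGraph 4).Adj a b))

/-- The elimination tree of depth 3: root 0, middle 2, leaves 1 and 3. -/
private def T1 : ElimTree (cycleGraph 4) where
  anc := a1
  trans := by decide
  irrefl := by decide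
  chainAnc := by decide
  edgeComp := by decide
  subtreeConn := by
    intro v
    rw [connected_iff]
    fin_cases v <;> exact ⟨by decide, ⟨⟨_, Or.inl rfl⟩⟩⟩

/-- The matched elimination tree of depth 4: the path 0-1-2-3 as a chain. -/
private def T2 : ElimTree (cycleGraph 4) where
  anc := lt4
  trans := by decide
  irrefl := by decide
  chainAnc := by decide
  edgeComp := by decide
  subtreeConn := by
    intro v
    rw [connected_iff]
    fin_cases v <;> exact ⟨by decide, ⟨⟨_, Or.inl rfl⟩⟩⟩

private lemma pair_ncard_le {s : Set (Fin 4)} {a b : Fin 4} (h : s ⊆ {a, b}) :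
    s.ncard ≤ 2 := by
  calc s.ncard ≤ ({a, b} : Set (Fin 4)).ncard := Set.ncard_le_ncard h (Set.toFinite _)
    _ ≤ 2 := Set.ncard_insert_le _ _ |>.trans (by simp)

private lemma triple_ncard_le {s : Set (Fin 4)} {a b c : Fin 4} (h : s ⊆ {a, b, c}) :
    s.ncard ≤ 3 := by
  calc s.ncard ≤ ({a, b, c} : Set (Fin 4)).ncard := Set.ncard_le_ncard h (Set.toFinite _)
    _ ≤ 3 := by
        refine (Set.ncard_insert_le _ _).trans ?_
        have := Set.ncard_insert_le b ({c} : Set (Fin 4))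
        simp only [Set.ncard_singleton] at this
        omega

private lemma T1_depth : T1.depth = 3 := by
  show (Finset.univ.sup fun v : Fin 4 => {u : Fin 4 | a1 u v}.ncard + 1) = 3
  have h1 : {u : Fin 4 | a1 u 1}.ncard = 2 := by
    rw [show {u : Fin 4 | a1 u 1} = ↑({0, 2} : Finset (Fin 4)) by
      ext u; fin_cases u <;> decide]
    rw [Set.ncard_coe_finset]; rfl
  apply le_antisymm
  · apply Finset.sup_le
    intro v _
    have hsub : {u : Fin 4 | a1 u v} ⊆ {0, 2} := by
      intro x hx
      rcases (hx : (x = 0 ∧ v ≠ 0) ∨ (x = 2 ∧ (v = 1 ∨ v = 3))) with ⟨rfl, -⟩ | ⟨rfl, -⟩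
      · exact Or.inl rfl
      · exact Or.inr rfl
    have := pair_ncard_le hsub
    omega
  · have hb : {u : Fin 4 | a1 u 1}.ncard + 1 ≤
        Finset.univ.sup (fun v : Fin 4 => {u : Fin 4 | a1 u v}.ncard + 1) :=
      Finset.le_sup (f := fun v : Fin 4 => {u : Fin 4 | a1 u v}.ncard + 1) (Finset.mem_univ 1)
    omega

private lemma T2_depth : T2.depth = 4 := by
  show (Finset.univ.sup fun v : Fin 4 => {u : Fin 4 | lt4 u v}.ncard + 1) = 4
  have h3 : {u : Fin 4 | lt4 u 3}.ncard = 3 := by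
    rw [show {u : Fin 4 | lt4 u 3} = ↑({0, 1, 2} : Finset (Fin 4)) by
      ext u; fin_cases u <;> decide]
    rw [Set.ncard_coe_finset]; rfl
  apply le_antisymm
  · apply Finset.sup_le
    intro v _
    have hsub : {u : Fin 4 | lt4 u v} ⊆ {0, 1, 2} := by
      intro x hx
      have hx' : x < v := hx
      fin_cases x
      · exact Or.inl rfl
      · exact Or.inr (Or.inl rfl)
      · exact Or.inr (Or.inr rfl)
      · exact absurd hx' (by fin_cases v <;> decide)
    have := triple_ncard_le hsub
    omega
  · have hb : {u : Fin 4 | lt4 u 3}.ncard + 1 ≤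
        Finset.univ.sup (fun v : Fin 4 => {u : Fin 4 | lt4 u v}.ncard + 1) :=
      Finset.le_sup (f := fun v : Fin 4 => {u : Fin 4 | lt4 u v}.ncard + 1) (Finset.mem_univ 3)
    omega

private lemma T2_matched : T2.IsMatched := by
  intro v hleaf l hpair hmem
  have hv : v = 3 := by
    fin_cases v
    · exact absurd (show lt4 0 1 by decide) (hleaf 1)
    · exact absurd (show lt4 1 2 by decide) (hleaf 2)
    · exact absurd (show lt4 2 3 by decide) (hleaf 3)
    · rfl
  subst hv
  have hl : l = [0, 1, 2, 3] := by
    have hnd : l.Nodup := hpair.imp fun h => ne_of_lt (show _ < _ from h)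
    have hall : ∀ u : Fin 4, u ∈ l := by
      intro u
      refine (hmem u).2 ?_
      fin_cases u
      · exact Or.inl (show lt4 0 3 by decide)
      · exact Or.inl (show lt4 1 3 by decide)
      · exact Or.inl (show lt4 2 3 by decide)
      · exact Or.inr rfl
    have hperm : l.Perm [0, 1, 2, 3] := by
      apply List.perm_of_nodup_nodup_toFinset_eq hnd (by decide)
      ext u
      simp only [List.mem_toFinset, hall u, true_iff]
      fin_cases u <;> decide
    haveI : IsAntisymm (Fin 4) T2.anc := inferInstanceAs (IsAntisymm (Fin 4) lt4)
    exact List.Perm.eq_of_pairwise (fun a b _ _ h1 h2 => absurd (lt_trans (show a < b from h1) h2) (lt_irrefl _)) hpair (show List.Pairwise lt4 [0, 1, 2, 3] by decide :) hperm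
  subst hl
  left
  refine ⟨by decide, ?_⟩
  intro j h
  have hj : j ≤ 1 := by
    simp only [List.length_cons, List.length_nil] at h
    omega
  interval_cases j
  · exact (by decide : (cycleGraph 4).Adj 0 1)
  · exact (by decide : (cycleGraph 4).Adj 2 3)

private lemma depth_bound {T : ElimTree (cycleGraph 4)} {d : ℕ} (h : T.depth ≤ d)
    (v : Fin 4) : {u | T.anc u v}.ncard + 1 ≤ d :=
  le_trans (Finset.le_sup (f := fun v => {u | T.anc u v}.ncard + 1) (Finset.mem_univ v)) h

private lemma three_le_ncard {s : Set (Fin 4)} {a b c : Fin 4}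
    (hab : a ≠ b) (hac : a ≠ c) (hbc : b ≠ c)
    (ha : a ∈ s) (hb : b ∈ s) (hc : c ∈ s) : 3 ≤ s.ncard := by
  have hsub : ({a, b, c} : Set (Fin 4)) ⊆ s := by
    intro x hx
    rcases hx with rfl | rfl | rfl <;> assumption
  have h2 : ({a, b, c} : Set (Fin 4)).ncard = 3 := by
    rw [Set.ncard_insert_of_notMem (by simp [hab, hac]) (Set.toFinite _),
      Set.ncard_insert_of_notMem (by simp [hbc]) (Set.toFinite _),
      Set.ncard_singleton]
  rw [← h2]
  exact Set.ncard_le_ncard hsub (Set.toFinite _)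

/-- In any elimination tree of `C₄` some vertex has two distinct ancestors. -/
private lemma two_anc (T : ElimTree (cycleGraph 4)) :
    ∃ u u' v : Fin 4, u ≠ u' ∧ T.anc u v ∧ T.anc u' v := by
  rcases T.edgeComp 0 1 (by decide) with h01 | h10
  · rcases T.edgeComp 1 2 (by decide) with h12 | h21
    · exact ⟨0, 1, 2, by decide, T.trans _ _ _ h01 h12, h12⟩
    · exact ⟨0, 2, 1, by decide, h01, h21⟩
  · rcases T.edgeComp 3 0 (by decide) with h30 | h03
    · exact ⟨1, 3, 0, by decide, h10, h30⟩
    · exact ⟨1, 0, 3, by decide, T.trans _ _ _ h10 h03, h03⟩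

private lemma td_lb (T : ElimTree (cycleGraph 4)) : 3 ≤ T.depth := by
  by_contra h
  push_neg at h
  have hle : T.depth ≤ 2 := by omega
  obtain ⟨u, u', v, huu, h1, h2⟩ := two_anc T
  have hb := depth_bound hle v
  have hpair : ({u, u'} : Set (Fin 4)).ncard ≤ {x | T.anc x v}.ncard :=
    Set.ncard_le_ncard (by rintro x (rfl | rfl) <;> assumption) (Set.toFinite _)
  rw [Set.ncard_pair huu] at hpair
  omega

private lemma matched3 {a b v : Fin 4} (M : MatchedList (cycleGraph 4) [a, b, v]) :
    (cycleGraph 4).Adj a b ∧ (cycleGraph 4).Adj b v := by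
  have hlen : ([a, b, v] : List (Fin 4)).length = 3 := rfl
  rcases M with ⟨he, -⟩ | ⟨-, p, hp, hlt, h1, h2⟩
  · rw [hlen] at he
    exact absurd he (by decide)
  · rw [hlen] at hlt
    have hp1 : p = 1 := by
      rcases hp with ⟨k, hk⟩
      omega
    subst hp1
    exact ⟨h1 0 (by omega), h2 0 (by omega)⟩

private lemma fourth_adj : ∀ a b v w : Fin 4,
    (cycleGraph 4).Adj a b → (cycleGraph 4).Adj b v → a ≠ v →
    w ≠ a → w ≠ b → w ≠ v → (cycleGraph 4).Adj w v := by decide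

private lemma fourth_exists : ∀ a b v : Fin 4, a ≠ b → a ≠ v → b ≠ v →
    ∃ w : Fin 4, w ≠ a ∧ w ≠ b ∧ w ≠ v := by decide

private lemma mtd_lb (T : ElimTree (cycleGraph 4)) (hM : T.IsMatched) :
    4 ≤ T.depth := by
  by_contra h
  push_neg at h
  have hle : T.depth ≤ 3 := by omega
  have hcap : ∀ v : Fin 4, {u | T.anc u v}.ncard ≤ 2 := by
    intro v
    have := depth_bound hle v
    omega
  obtain ⟨u, u', v, huu, h1, h2⟩ := two_anc T
  obtain ⟨a, b, hab, hav, hbv, habanc⟩ :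
      ∃ a b : Fin 4, a ≠ b ∧ T.anc a v ∧ T.anc b v ∧ T.anc a b := by
    rcases T.chainAnc u u' v h1 h2 with heq | hlt | hgt
    · exact absurd heq huu
    · exact ⟨u, u', huu, h1, h2, hlt⟩
    · exact ⟨u', u, huu.symm, h2, h1, hgt⟩
  have hav' : a ≠ v := fun he => T.irrefl v (by rwa [he] at hav)
  have hbv' : b ≠ v := fun he => T.irrefl v (by rwa [he] at hbv)
  have hleaf : ∀ w, ¬ T.anc v w := by
    intro w hw
    have h3 := three_le_ncard hab hav' hbv'
      (show a ∈ {u | T.anc u w} from T.trans _ _ _ hav hw)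
      (show b ∈ {u | T.anc u w} from T.trans _ _ _ hbv hw)
      (show v ∈ {u | T.anc u w} from hw)
    have := hcap w
    omega
  have hanc : ∀ x, T.anc x v → x = a ∨ x = b := by
    intro x hx
    by_contra hcon
    push_neg at hcon
    have h3 := three_le_ncard hcon.1 hcon.2 hab
      (show x ∈ {u | T.anc u v} from hx)
      (show a ∈ {u | T.anc u v} from hav)
      (show b ∈ {u | T.anc u v} from hbv)
    have := hcap v
    omega
  have hmem : ∀ x : Fin 4, x ∈ [a, b, v] ↔ (T.anc x v ∨ x = v) := by
    intro x
    simp only [List.mem_cons, List.not_mem_nil, or_false]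
    constructor
    · rintro (rfl | rfl | rfl)
      · exact Or.inl hav
      · exact Or.inl hbv
      · exact Or.inr rfl
    · rintro (hx | rfl)
      · rcases hanc x hx with rfl | rfl
        · exact Or.inl rfl
        · exact Or.inr (Or.inl rfl)
      · exact Or.inr (Or.inr rfl)
  have hpw : List.Pairwise T.anc [a, b, v] := by
    refine List.Pairwise.cons ?_ (List.Pairwise.cons ?_ (List.pairwise_singleton _ _))
    · intro x hx
      simp only [List.mem_cons, List.not_mem_nil, or_false] at hx
      rcases hx with rfl | rfl
      · exact habanc
      · exact hav
    · intro x hx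
      simp only [List.mem_singleton] at hx
      subst hx
      exact hbv
  obtain ⟨hadj1, hadj2⟩ := matched3 (hM v hleaf [a, b, v] hpw hmem)
  obtain ⟨w, hwa, hwb, hwv⟩ := fourth_exists a b v hab hav' hbv'
  have hadj3 := fourth_adj a b v w hadj1 hadj2 hav' hwa hwb hwv
  rcases T.edgeComp w v hadj3 with hwv' | hvw
  · have h3 := three_le_ncard hab (fun he => hwa he.symm) (fun he => hwb he.symm)
      (show a ∈ {u | T.anc u v} from hav)
      (show b ∈ {u | T.anc u v} from hbv)
      (show w ∈ {u | T.anc u v} from hwv')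
    have := hcap v
    omega
  · have h3 := three_le_ncard hab hav' hbv'
      (show a ∈ {u | T.anc u w} from T.trans _ _ _ hav hvw)
      (show b ∈ {u | T.anc u w} from T.trans _ _ _ hbv hvw)
      (show v ∈ {u | T.anc u w} from hvw)
    have := hcap w
    omega

/-- The 4-cycle has treedepth 3 and matched treedepth 4. -/
theorem stmt18 :
    treedepth (SimpleGraph.cycleGraph 4) = 3 ∧
    mtd (SimpleGraph.cycleGraph 4) = 4 := by
  constructor
  · have mem3 : 3 ∈ {d | ∃ T : ElimTree (cycleGraph 4), T.depth = d} := ⟨T1, T1_depth⟩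
    refine le_antisymm (Nat.sInf_le mem3) (le_csInf ⟨3, mem3⟩ ?_)
    rintro d ⟨T, rfl⟩
    exact td_lb T
  · have mem4 : 4 ∈ {d | ∃ T : ElimTree (cycleGraph 4), T.IsMatched ∧ T.depth = d} :=
      ⟨T2, T2_matched, T2_depth⟩
    refine le_antisymm (Nat.sInf_le mem4) (le_csInf ⟨4, mem4⟩ ?_)
    rintro d ⟨T, hTm, rfl⟩
    exact mtd_lb T hTm
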